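/- Let u : ℝ → ℝ be C¹ and 1-periodic with μ₀ = ∫₀¹ u dx and μ₁ = (∫₀¹ (u')² dx)^{1/2}. Then ‖u‖_{H¹}, defined as ‖u‖_{L²[0,1]} + ‖u'‖_{L²[0,1]}, is at most |μ₀| + (1 + √3/6) μ₁. -/

import Mathlib

/-!
Integrating by parts against the kernel `t - x - 1/2` on `[x, x + 1]`, periodicity cancels the
boundary terms: `u x - μ₀ = ∫ t in x..x + 1, (t - x - 1/2) * u' t`. Since the kernel has square
integral `1/12`, Cauchy–Schwarz gives `|u x - μ₀| ≤ μ₁ / √12 = (√3 / 6) μ₁` for every `x`, hence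
`‖u‖² = μ₀² + ‖u - μ₀‖² ≤ (|μ₀| + (√3 / 6) μ₁)²`.
-/

open MeasureTheory

theorem MeasureTheory.sq_integral_mul_le_integral_sq_mul_integral_sq {α : Type*}
    [MeasurableSpace α] {μ : Measure α} {f g : α → ℝ} (hf : Integrable (fun x => f x ^ 2) μ)
    (hg : Integrable (fun x => g x ^ 2) μ) (hfg : Integrable (fun x => f x * g x) μ) :
    (∫ x, f x * g x ∂μ) ^ 2 ≤ (∫ x, f x ^ 2 ∂μ) * ∫ x, g x ^ 2 ∂μ := by
  have hquad : ∀ s : ℝ, 0 ≤ (∫ x, f x ^ 2 ∂μ) * (s * s) + (2 * ∫ x, f x * g x ∂μ) * s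
      + ∫ x, g x ^ 2 ∂μ := by
    intro s
    have hfg' : Integrable (fun x => s ^ 2 * f x ^ 2 + 2 * s * (f x * g x)) μ :=
      (hf.const_mul _).add (hfg.const_mul _)
    calc (0 : ℝ) ≤ ∫ x, (s * f x + g x) ^ 2 ∂μ := integral_nonneg fun x => sq_nonneg _
      _ = ∫ x, (s ^ 2 * f x ^ 2 + 2 * s * (f x * g x)) + g x ^ 2 ∂μ := by
          congr 1; ext x; ring
      _ = _ := by
          rw [integral_add hfg' hg, integral_add (hf.const_mul _) (hfg.const_mul _),
            integral_const_mul, integral_const_mul]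
          ring
  have hdiscrim := discrim_le_zero hquad
  rw [discrim] at hdiscrim
  nlinarith

open intervalIntegral

theorem intervalIntegral.sq_integral_mul_le_integral_sq_mul_integral_sq {f g : ℝ → ℝ}
    {a b : ℝ} (hf : IntervalIntegrable (fun x => f x ^ 2) volume a b)
    (hg : IntervalIntegrable (fun x => g x ^ 2) volume a b)
    (hfg : IntervalIntegrable (fun x => f x * g x) volume a b) :
    (∫ x in a..b, f x * g x) ^ 2 ≤ (∫ x in a..b, f x ^ 2) * ∫ x in a..b, g x ^ 2 := by
  rcases le_total a b with hab | hba
  · simp only [integral_of_le hab]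
    exact MeasureTheory.sq_integral_mul_le_integral_sq_mul_integral_sq hf.1 hg.1 hfg.1
  · simp only [integral_symm b a, integral_of_le hba, neg_sq, neg_mul_neg]
    exact MeasureTheory.sq_integral_mul_le_integral_sq_mul_integral_sq hf.2 hg.2 hfg.2

theorem intervalIntegral.integral_sub_const_sq {f : ℝ → ℝ} {a b : ℝ} (c : ℝ)
    (hf : IntervalIntegrable f volume a b)
    (hf2 : IntervalIntegrable (fun x => f x ^ 2) volume a b) :
    ∫ x in a..b, (f x - c) ^ 2
      = (∫ x in a..b, f x ^ 2) - 2 * c * (∫ x in a..b, f x) + (b - a) * c ^ 2 :=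
  calc ∫ x in a..b, (f x - c) ^ 2 = ∫ x in a..b, (f x ^ 2 - 2 * c * f x) + c ^ 2 := by
        congr 1; ext x; ring
    _ = _ := by
        rw [integral_add (hf2.sub (hf.const_mul _)) intervalIntegrable_const,
          integral_sub hf2 (hf.const_mul _), integral_const_mul, integral_const, smul_eq_mul]

theorem intervalIntegral.integral_sub_midpoint_sq (x T : ℝ) :
    ∫ t in x..x + T, (t - x - T / 2) ^ 2 = T ^ 3 / 12 := by
  simp_rw [sub_sub]
  rw [integral_comp_sub_right (fun t => t ^ 2), integral_pow]
  ring

namespace Function.Periodic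

variable {u : ℝ → ℝ} {T : ℝ}

theorem mul_sub_integral_eq_integral_mul_deriv (hu : ContDiff ℝ 1 u) (hper : Periodic u T)
    (x : ℝ) : T * u x - ∫ t in 0..T, u t = ∫ t in x..x + T, (t - x - T / 2) * deriv u t := by
  rw [integral_mul_deriv_eq_deriv_mul (u := fun t => t - x - T / 2) (u' := fun _ => 1)
    (fun t _ => ((hasDerivAt_id t).sub_const x).sub_const (T / 2))
    (fun t _ => (hu.differentiable one_ne_zero t).hasDerivAt) intervalIntegrable_const
    ((hu.continuous_deriv le_rfl).intervalIntegrable _ _), hper x]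
  simp only [one_mul, hper.intervalIntegral_add_eq x 0, zero_add]
  ring

theorem sq_mul_sub_integral_le (hu : ContDiff ℝ 1 u) (hper : Periodic u T) (x : ℝ) :
    (T * u x - ∫ t in 0..T, u t) ^ 2 ≤ T ^ 3 / 12 * ∫ t in 0..T, deriv u t ^ 2 := by
  have hu' := hu.continuous_deriv le_rfl
  have hker : Continuous fun t : ℝ => t - x - T / 2 := by fun_prop
  have hper' : Periodic (fun t => deriv u t ^ 2) T := fun t => by
    simp only [← deriv_comp_add_const, funext hper]
  calc (T * u x - ∫ t in 0..T, u t) ^ 2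
      ≤ (∫ t in x..x + T, (t - x - T / 2) ^ 2) * ∫ t in x..x + T, deriv u t ^ 2 := by
        rw [hper.mul_sub_integral_eq_integral_mul_deriv hu x]
        exact sq_integral_mul_le_integral_sq_mul_integral_sq
          ((hker.pow 2).intervalIntegrable _ _) ((hu'.pow 2).intervalIntegrable _ _)
          ((hker.mul hu').intervalIntegrable _ _)
    _ = T ^ 3 / 12 * ∫ t in 0..T, deriv u t ^ 2 := by
        rw [integral_sub_midpoint_sq, hper'.intervalIntegral_add_eq x 0, zero_add]

theorem integral_sq_mul_sub_integral_le (hu : ContDiff ℝ 1 u) (hper : Periodic u T)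
    (hT : 0 ≤ T) :
    ∫ x in 0..T, (T * u x - ∫ t in 0..T, u t) ^ 2 ≤ T ^ 4 / 12 * ∫ t in 0..T, deriv u t ^ 2 :=
  calc ∫ x in 0..T, (T * u x - ∫ t in 0..T, u t) ^ 2
      ≤ ∫ _ in 0..T, T ^ 3 / 12 * ∫ t in 0..T, deriv u t ^ 2 :=
        integral_mono_on hT
          ((((continuous_const.mul hu.continuous).sub continuous_const).pow 2).intervalIntegrable
            0 T)
          intervalIntegrable_const fun x _ => hper.sq_mul_sub_integral_le hu x
    _ = T ^ 4 / 12 * ∫ t in 0..T, deriv u t ^ 2 := by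
        rw [intervalIntegral.integral_const, smul_eq_mul]
        ring

end Function.Periodic

theorem H1_norm_bound_periodic
    (u : ℝ → ℝ) (hu : ContDiff ℝ 1 u) (hper : Function.Periodic u 1)
    (μ₀ μ₁ : ℝ) (hμ₀ : μ₀ = ∫ x in (0:ℝ)..1, u x)
    (hμ₁ : μ₁ = Real.sqrt (∫ x in (0:ℝ)..1, (deriv u x) ^ 2)) :
    Real.sqrt (∫ x in (0:ℝ)..1, (u x) ^ 2)
      + Real.sqrt (∫ x in (0:ℝ)..1, (deriv u x) ^ 2)
      ≤ |μ₀| + (1 + Real.sqrt 3 / 6) * μ₁ := by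
  have hμ₁_nonneg : 0 ≤ μ₁ := hμ₁ ▸ Real.sqrt_nonneg _
  have hμ₁_sq : ∫ x in (0:ℝ)..1, deriv u x ^ 2 = μ₁ ^ 2 := by
    rw [hμ₁, Real.sq_sqrt (integral_nonneg zero_le_one fun x _ => sq_nonneg _)]
  have hvar := hper.integral_sq_mul_sub_integral_le hu zero_le_one
  simp only [one_mul, one_pow] at hvar
  rw [← hμ₀, integral_sub_const_sq μ₀ (hu.continuous.intervalIntegrable 0 1)
    ((hu.continuous.pow 2).intervalIntegrable 0 1), ← hμ₀, hμ₁_sq] at hvar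
  have hL2 : Real.sqrt (∫ x in (0:ℝ)..1, u x ^ 2) ≤ |μ₀| + Real.sqrt 3 / 6 * μ₁ := by
    rw [Real.sqrt_le_left (by positivity)]
    have h3 : Real.sqrt 3 ^ 2 = 3 := Real.sq_sqrt (by norm_num)
    nlinarith [sq_abs μ₀, mul_nonneg (mul_nonneg (abs_nonneg μ₀) (Real.sqrt_nonneg 3)) hμ₁_nonneg]
  rw [← hμ₁]
  linarith
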